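/- Let Γ = Γ₁ *_Σ Γ₂ be a nontrivial amalgamated free product of countable groups, i.e. Σ embeds as a proper subgroup of both Γ₁ and Γ₂. Let π : Γ → O(ℓ²_ℝ(Γ/Σ)) be the quasi-regular orthogonal representation, given by permuting the left cosets: (π(g)f)(xΣ) = f(g⁻¹xΣ). Then there exists an unbounded 1-cocycle for π: a map c : Γ → ℓ²_ℝ(Γ/Σ) satisfying c(gh) = c(g) + π(g)c(h) for all g,h ∈ Γ, with sup_{g∈Γ} ‖c(g)‖ = ∞. -/

import Mathlib

/-!
Let `a ∈ Γ₁ \ Σ`, `b ∈ Γ₂ \ Σ` and `δ` the Dirac function at the coset `Σ`. The cocycle `c` is zero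
on `Γ₁` and the coboundary `x ↦ δ - x • δ` on `Γ₂`; the two agree on `Σ` because `Σ` fixes `δ`,
so they glue to a homomorphism `Γ → ℓ² ⋊ Γ`. Then
`c((ab)ⁿ) = ∑_{m<n} (δ_{(ab)ᵐ a Σ} - δ_{(ab)ᵐ⁺¹ Σ})`, and by the normal form theorem the cosets
of the prefixes of the alternating word `abab⋯` are pairwise distinct, so `‖c((ab)ⁿ)‖² ≥ n`.
-/

open Monoid SemidirectProduct

section SemidirectCocycle

variable {Γ A : Type*} [Group Γ] [AddCommGroup A] [DistribMulAction Γ A]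

variable (Γ A) in
def DistribMulAction.toMulAutMultiplicative : Γ →* MulAut (Multiplicative A) where
  toFun g := AddEquiv.toMultiplicative (DistribMulAction.toAddEquiv A g)
  map_one' := by ext; simp
  map_mul' g h := by ext; simp [mul_smul]

@[simp]
lemma DistribMulAction.toMulAutMultiplicative_apply (g : Γ) (a : Multiplicative A) :
    DistribMulAction.toMulAutMultiplicative Γ A g a = .ofAdd (g • a.toAdd) := rfl

lemma SemidirectProduct.toAdd_left_map_mul
    (ψ : Γ →* Multiplicative A ⋊[DistribMulAction.toMulAutMultiplicative Γ A] Γ)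
    (hψ : ∀ g, (ψ g).right = g) (g h : Γ) :
    (ψ (g * h)).left.toAdd = (ψ g).left.toAdd + g • (ψ h).left.toAdd := by
  rw [map_mul, mul_left, hψ]; rfl

end SemidirectCocycle

namespace Monoid.PushoutI

variable {ι B : Type*} {G : ι → Type*} [Group B] [∀ i, Group (G i)] {φ : ∀ i, B →* G i}
  {A : Type*} [AddCommGroup A] [DistribMulAction (PushoutI φ) A]
  (f : ι → A) (hf : ∀ i b, base φ b • f i = f i)

/-- On `G i` this is `inr` conjugated by `inl (f i)`, whose `A`-component is the coboundary
`x ↦ f i - x • f i`. -/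
def twistedLift :
    PushoutI φ →* Multiplicative A ⋊[DistribMulAction.toMulAutMultiplicative _ A] PushoutI φ :=
  lift (fun i => (MulAut.conj (inl (.ofAdd (f i)))).toMonoidHom.comp (inr.comp (of i)))
    (inr.comp (base φ)) fun i => by
      ext b
      · simp [of_apply_eq_base, hf]
      · simp [of_apply_eq_base]

lemma right_twistedLift (g : PushoutI φ) : (twistedLift f hf g).right = g := by
  suffices rightHom.comp (twistedLift f hf) = MonoidHom.id (PushoutI φ) from
    DFunLike.congr_fun this g
  refine hom_ext (fun i => ?_) ?_ <;> ext <;> simp [twistedLift]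

def gluedCocycle (g : PushoutI φ) : A :=
  (twistedLift f hf g).left.toAdd

lemma gluedCocycle_mul (g h : PushoutI φ) :
    gluedCocycle f hf (g * h) = gluedCocycle f hf g + g • gluedCocycle f hf h :=
  toAdd_left_map_mul _ (right_twistedLift f hf) g h

lemma gluedCocycle_of (i : ι) (x : G i) :
    gluedCocycle f hf (of (φ := φ) i x) = f i - of (φ := φ) i x • f i := by
  simp [gluedCocycle, twistedLift, sub_eq_add_neg]

end Monoid.PushoutI

section Alternating

variable {G : Bool → Type*} (w : ∀ i, G i)

def alternatingList : Bool → ℕ → List (Σ i, G i)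
  | _, 0 => []
  | s, n + 1 => ⟨s, w s⟩ :: alternatingList (!s) n

lemma mem_alternatingList {s : Bool} {n : ℕ} {l : Σ i, G i} (hl : l ∈ alternatingList w s n) :
    l = ⟨l.1, w l.1⟩ := by
  induction n generalizing s with
  | zero => simp [alternatingList] at hl
  | succ n ih =>
    rcases List.mem_cons.1 hl with rfl | hl
    · rfl
    · exact ih hl

lemma isChain_alternatingList (s : Bool) (n : ℕ) :
    (alternatingList w s n).IsChain fun l l' => l.1 ≠ l'.1 := by
  induction n generalizing s with
  | zero => exact List.isChain_nil
  | succ n ih =>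
    refine List.isChain_cons.2 ⟨fun l hl => ?_, ih _⟩
    cases n with
    | zero => simp [alternatingList] at hl
    | succ n =>
      obtain rfl : l = ⟨!s, w !s⟩ := by simpa [alternatingList, eq_comm] using hl
      simp

lemma alternatingList_add (s : Bool) (n k : ℕ) :
    alternatingList w s (n + k) = alternatingList w s n ++ alternatingList w (not^[n] s) k := by
  induction n generalizing s with
  | zero => simp [alternatingList]
  | succ n ih => simp [Nat.succ_add, alternatingList, ih]

variable {B : Type*} [Group B] [∀ i, Group (G i)] (φ : ∀ i, B →* G i)

def alternatingProd (s : Bool) (n : ℕ) : PushoutI φ :=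
  ((alternatingList w s n).map fun l => PushoutI.of l.1 l.2).prod

lemma alternatingProd_add (s : Bool) (n k : ℕ) :
    alternatingProd w φ s (n + k) =
      alternatingProd w φ s n * alternatingProd w φ (not^[n] s) k := by
  simp [alternatingProd, alternatingList_add]

lemma alternatingProd_two_mul_add (s : Bool) (m k : ℕ) :
    alternatingProd w φ s (2 * m + k) =
      alternatingProd w φ s (2 * m) * alternatingProd w φ s k := by
  rw [alternatingProd_add, Bool.involutive_not.iterate_two_mul, id]

variable {w φ}

lemma alternatingProd_notMem_range (hinj : ∀ i, Function.Injective (φ i))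
    (hw : ∀ i, w i ∉ (φ i).range) (s : Bool) {n : ℕ} (hn : n ≠ 0) :
    alternatingProd w φ s n ∉ (PushoutI.base φ).range := by
  have hreduced {l} (hl : l ∈ alternatingList w s n) : l.2 ∉ (φ l.1).range := by
    rw [mem_alternatingList w hl]; exact hw _
  let word : CoprodI.Word G :=
    ⟨alternatingList w s n, fun l hl h1 => hreduced hl (h1 ▸ one_mem _),
      isChain_alternatingList w s n⟩
  have hprod : PushoutI.ofCoprodI word.prod = alternatingProd w φ s n := by
    simp [word, CoprodI.Word.prod, alternatingProd, map_list_prod, Function.comp_def]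
  intro hrange
  have hempty := PushoutI.Reduced.eq_empty_of_mem_range hinj (w := word) (fun _ => hreduced)
    (hprod ▸ hrange)
  obtain ⟨n, rfl⟩ := Nat.exists_eq_succ_of_ne_zero hn
  simp [word, alternatingList, CoprodI.Word.empty] at hempty

lemma injective_mk_alternatingProd (hinj : ∀ i, Function.Injective (φ i))
    (hw : ∀ i, w i ∉ (φ i).range) (s : Bool) :
    Function.Injective fun n =>
      (alternatingProd w φ s n : PushoutI φ ⧸ (PushoutI.base φ).range) := by
  refine Function.Injective.of_lt_imp_ne fun n m hnm heq => ?_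
  obtain ⟨k, rfl⟩ := Nat.exists_eq_add_of_lt hnm
  rw [QuotientGroup.eq, add_assoc, alternatingProd_add, inv_mul_cancel_left] at heq
  exact alternatingProd_notMem_range hinj hw _ (by omega) heq

end Alternating

section LpFinsupp

open scoped ENNReal

lemma lp.card_le_norm_sq {α : Type*} {E : α → Type*} [∀ a, NormedAddCommGroup (E a)]
    (f : lp E 2) (s : Finset α) (hs : ∀ a ∈ s, 1 ≤ ‖f a‖) : (s.card : ℝ) ≤ ‖f‖ ^ 2 := by
  have h := lp.sum_rpow_le_norm_rpow (by norm_num) f s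
  simp only [ENNReal.toReal_ofNat, Real.rpow_two] at h
  calc (s.card : ℝ) = ∑ _ ∈ s, (1 : ℝ) := by simp
    _ ≤ ∑ a ∈ s, ‖f a‖ ^ 2 := Finset.sum_le_sum fun a ha => one_le_pow₀ (hs a ha)
    _ ≤ ‖f‖ ^ 2 := h

variable {α E : Type*} [NormedAddCommGroup E]

noncomputable def Finsupp.toLp (p : ℝ≥0∞) (v : α →₀ E) : lp (fun _ : α => E) p :=
  ⟨⇑v, (memℓp_zero v.hasFiniteSupport).of_exponent_ge zero_le⟩

@[simp]
lemma Finsupp.coe_toLp (p : ℝ≥0∞) (v : α →₀ E) : ⇑(v.toLp p) = v := rfl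

end LpFinsupp

section QuasiRegular

attribute [local instance] Finsupp.comapSMul Finsupp.comapMulAction Finsupp.comapDistribMulAction

variable {B : Type*} {G : Bool → Type*} [Group B] [∀ i, Group (G i)] (φ : ∀ i, B →* G i)

local notation "Q[" φ "]" => PushoutI φ ⧸ MonoidHom.range (PushoutI.base φ)

lemma mk_base_eq_mk_one (b : B) : (PushoutI.base φ b : Q[φ]) = ((1 : PushoutI φ) : Q[φ]) :=
  QuotientGroup.eq.2 ⟨b⁻¹, by simp⟩

noncomputable def quasiRegularCocycle : PushoutI φ → (Q[φ] →₀ ℝ) :=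
  PushoutI.gluedCocycle (Pi.single true (Finsupp.single ((1 : PushoutI φ) : Q[φ]) 1))
    fun i b => by cases i <;> simp [mk_base_eq_mk_one]

lemma quasiRegularCocycle_mul (g h : PushoutI φ) :
    quasiRegularCocycle φ (g * h) = quasiRegularCocycle φ g + g • quasiRegularCocycle φ h :=
  PushoutI.gluedCocycle_mul _ _ g h

lemma quasiRegularCocycle_mul_apply (g h : PushoutI φ) (k : Q[φ]) :
    quasiRegularCocycle φ (g * h) k =
      quasiRegularCocycle φ g k + quasiRegularCocycle φ h (g⁻¹ • k) := by
  simp [quasiRegularCocycle_mul]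

lemma quasiRegularCocycle_of_false (x : G false) :
    quasiRegularCocycle φ (PushoutI.of false x) = 0 := by
  simp [quasiRegularCocycle, PushoutI.gluedCocycle_of]

lemma quasiRegularCocycle_of_true (x : G true) :
    quasiRegularCocycle φ (PushoutI.of true x) =
      Finsupp.single ((1 : PushoutI φ) : Q[φ]) 1 -
        Finsupp.single (PushoutI.of (φ := φ) true x : Q[φ]) 1 := by
  simp [quasiRegularCocycle, PushoutI.gluedCocycle_of]

variable {φ} (w : ∀ i, G i)

lemma quasiRegularCocycle_alternatingProd_two :
    quasiRegularCocycle φ (alternatingProd w φ false 2) =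
      Finsupp.single (alternatingProd w φ false 1 : Q[φ]) 1 -
        Finsupp.single (alternatingProd w φ false 2 : Q[φ]) 1 := by
  have h1 : alternatingProd w φ false 1 = PushoutI.of false (w false) := by
    simp [alternatingProd, alternatingList]
  have h2 : alternatingProd w φ false 2 =
      PushoutI.of false (w false) * PushoutI.of true (w true) := by
    simp [alternatingProd, alternatingList]; rfl
  simp [h1, h2, quasiRegularCocycle_mul, quasiRegularCocycle_of_false,
    quasiRegularCocycle_of_true, smul_sub, Finsupp.comapSMul_single, MulAction.Quotient.smul_mk]

lemma quasiRegularCocycle_alternatingProd_two_mul (n : ℕ) :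
    quasiRegularCocycle φ (alternatingProd w φ false (2 * n)) =
      ∑ m ∈ Finset.range n,
        (Finsupp.single (alternatingProd w φ false (2 * m + 1) : Q[φ]) 1 -
          Finsupp.single (alternatingProd w φ false (2 * m + 2) : Q[φ]) 1) := by
  have smul_mk (m k : ℕ) :
      alternatingProd w φ false (2 * m) • (alternatingProd w φ false k : Q[φ]) =
        alternatingProd w φ false (2 * m + k) := by
    rw [MulAction.Quotient.smul_mk, smul_eq_mul, alternatingProd_two_mul_add]
  induction n with
  | zero => simp [alternatingProd, alternatingList, quasiRegularCocycle, PushoutI.gluedCocycle]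
  | succ n ih =>
    rw [mul_add_one, alternatingProd_two_mul_add, quasiRegularCocycle_mul,
      quasiRegularCocycle_alternatingProd_two, smul_sub, Finsupp.comapSMul_single,
      Finsupp.comapSMul_single, smul_mk, smul_mk, ih, Finset.sum_range_succ]

lemma quasiRegularCocycle_alternatingProd_apply (hinj : ∀ i, Function.Injective (φ i))
    (hw : ∀ i, w i ∉ (φ i).range) {n j : ℕ} (hj : j < n) :
    quasiRegularCocycle φ (alternatingProd w φ false (2 * n))
      (alternatingProd w φ false (2 * j + 1)) = 1 := by
  classical
  have hu := injective_mk_alternatingProd hinj hw false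
  simp only [quasiRegularCocycle_alternatingProd_two_mul, Finsupp.finsetSum_apply,
    Finsupp.sub_apply, Finsupp.single_apply, hu.eq_iff]
  simp [hj, show ∀ m, 2 * m + 2 ≠ 2 * j + 1 by omega]

variable (φ) in
theorem not_bddAbove_norm_quasiRegularCocycle (hinj : ∀ i, Function.Injective (φ i))
    (hproper : ∀ i, (φ i).range ≠ ⊤) :
    ¬ BddAbove (Set.range fun g => ‖(quasiRegularCocycle φ g).toLp 2‖) := by
  have hexists : ∀ i, ∃ x, x ∉ (φ i).range := fun i => by
    simpa [Subgroup.eq_top_iff'] using hproper i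
  choose w hw using hexists
  rintro ⟨M, hM⟩
  obtain ⟨n, hn⟩ := exists_nat_gt (M ^ 2)
  set c := (quasiRegularCocycle φ (alternatingProd w φ false (2 * n))).toLp 2
  let cosets : ℕ ↪ Q[φ] := ⟨fun j => alternatingProd w φ false (2 * j + 1),
    (injective_mk_alternatingProd hinj hw false).comp fun _ _ h => by omega⟩
  have hcard : ((Finset.range n).map cosets).card ≤ ‖c‖ ^ 2 := by
    refine lp.card_le_norm_sq c _ fun k hk => ?_
    obtain ⟨j, hj, rfl⟩ := Finset.mem_map.1 hk
    simp [c, cosets, quasiRegularCocycle_alternatingProd_apply w hinj hw (Finset.mem_range.1 hj)]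
  have hc : ‖c‖ ≤ M := hM ⟨_, rfl⟩
  simp only [Finset.card_map, Finset.card_range] at hcard
  nlinarith [norm_nonneg c]

end QuasiRegular

theorem stmt15_general (B : Type*) [Group B]
    (G : Bool → Type*) [∀ i, Group (G i)]
    (φ : ∀ i, B →* G i)
    (hinj : ∀ i, Function.Injective (φ i))
    (hproper : ∀ i, (φ i).range ≠ ⊤) :
    ∃ c : Monoid.PushoutI φ →
        lp (fun _ : Monoid.PushoutI φ ⧸ (Monoid.PushoutI.base φ).range => ℝ) 2,
      (∀ (g h : Monoid.PushoutI φ)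
        (k : Monoid.PushoutI φ ⧸ (Monoid.PushoutI.base φ).range),
        c (g * h) k = c g k + c h (g⁻¹ • k)) ∧
      ¬ BddAbove (Set.range fun g : Monoid.PushoutI φ => ‖c g‖) :=
  ⟨fun g => (quasiRegularCocycle φ g).toLp 2, quasiRegularCocycle_mul_apply φ,
    not_bddAbove_norm_quasiRegularCocycle φ hinj hproper⟩

/-- a nontrivial amalgamated free product `Γ = Γ₁ ∗_Σ Γ₂` (the pushout of
two injective homomorphisms `φ i : Σ → Γᵢ`, indexed by `i : Bool`, with proper images)
admits an unbounded 1-cocycle `c : Γ → ℓ²_ℝ(Γ/Σ)` for the quasi-regular orthogonal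
representation `(π(g)f)(xΣ) = f(g⁻¹xΣ)`; the cocycle identity `c(gh) = c(g) + π(g)c(h)`
is expressed pointwise. -/
theorem stmt15 (B : Type*) [Group B] [Countable B]
    (G : Bool → Type*) [∀ i, Group (G i)] [∀ i, Countable (G i)]
    (φ : ∀ i, B →* G i)
    (hinj : ∀ i, Function.Injective (φ i))
    (hproper : ∀ i, (φ i).range ≠ ⊤) :
    ∃ c : Monoid.PushoutI φ →
        lp (fun _ : Monoid.PushoutI φ ⧸ (Monoid.PushoutI.base φ).range => ℝ) 2,
      (∀ (g h : Monoid.PushoutI φ)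
        (k : Monoid.PushoutI φ ⧸ (Monoid.PushoutI.base φ).range),
        c (g * h) k = c g k + c h (g⁻¹ • k)) ∧
      ¬ BddAbove (Set.range fun g : Monoid.PushoutI φ => ‖c g‖) :=
  stmt15_general B G φ hinj hproper
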